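/- There exists c > 0 such that for every y > 0, every real x with |x| > 2, |φ_x(iy) − iy|² ≤ c/(x² + y²). -/

import Mathlib

/-!
Write `w = z - x` and `s = √(w² - 1)`, so that `φ_x(z) - z = s - w`. Since `(s - w)(s + w) = -1`,
it suffices to bound `|s + w|` from below by `|w|`. Comparing imaginary parts in `s² = w² - 1`
gives `Re s · Im s = Re w · Im w`; as `Im s ≥ 0` and `Im w > 0`, the real parts of `s` and `w`
have the same sign, as do their imaginary parts, so adding `s` cannot shorten `w`.
Hence `|φ_x(z) - z| ≤ 1/|z - x|`, and at `z = iy` this is the claim with `c = 1`.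
-/

noncomputable def upperSqrt (w : ℂ) : ℂ :=
  if 0 < (w ^ (1/2 : ℂ)).im then w ^ (1/2 : ℂ) else -(w ^ (1/2 : ℂ))

noncomputable def slitMap (x : ℝ) (z : ℂ) : ℂ :=
  (x : ℂ) + upperSqrt ((z - (x : ℂ)) ^ 2 - 1)

lemma upperSqrt_sq (w : ℂ) : upperSqrt w ^ 2 = w := by
  unfold upperSqrt
  split <;> simp

lemma upperSqrt_im_nonneg (w : ℂ) : 0 ≤ (upperSqrt w).im := by
  unfold upperSqrt
  split_ifs with h
  · exact h.le
  · simpa using h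

lemma norm_le_norm_add_of_mul_re_nonneg_of_mul_im_nonneg {s w : ℂ}
    (hre : 0 ≤ s.re * w.re) (him : 0 ≤ s.im * w.im) : ‖w‖ ≤ ‖s + w‖ := by
  rw [← sq_le_sq₀ (norm_nonneg _) (norm_nonneg _), Complex.sq_norm, Complex.sq_norm,
    Complex.normSq_apply, Complex.normSq_apply, Complex.add_re, Complex.add_im]
  nlinarith [sq_nonneg s.re, sq_nonneg s.im]

lemma norm_le_norm_upperSqrt_add {w : ℂ} (hw : 0 < w.im) :
    ‖w‖ ≤ ‖upperSqrt (w ^ 2 - 1) + w‖ := by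
  set s := upperSqrt (w ^ 2 - 1)
  have hsq : s ^ 2 = w ^ 2 - 1 := upperSqrt_sq _
  have hs_im : 0 ≤ s.im := upperSqrt_im_nonneg _
  have hprod : s.re * s.im = w.re * w.im := by
    have h := congrArg Complex.im hsq
    simp only [sq, Complex.mul_im, Complex.sub_im, Complex.one_im] at h
    linarith
  apply norm_le_norm_add_of_mul_re_nonneg_of_mul_im_nonneg _ (mul_nonneg hs_im hw.le)
  rcases hs_im.lt_or_eq with hs_pos | hs_zero
  · refine nonneg_of_mul_nonneg_left ?_ hs_pos
    rw [mul_right_comm, hprod]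
    nlinarith [mul_nonneg (sq_nonneg w.re) hw.le]
  · have : w.re = 0 := by
      rw [← hs_zero, mul_zero] at hprod
      exact (mul_eq_zero.mp hprod.symm).resolve_right hw.ne'
    simp [this]

lemma norm_upperSqrt_sub_le {w : ℂ} (hw : 0 < w.im) :
    ‖upperSqrt (w ^ 2 - 1) - w‖ ≤ ‖w‖⁻¹ := by
  set s := upperSqrt (w ^ 2 - 1)
  have hw_pos : 0 < ‖w‖ := norm_pos_iff.mpr fun h => by simp [h] at hw
  have hprod : ‖s - w‖ * ‖s + w‖ = 1 := by
    rw [← norm_mul, show (s - w) * (s + w) = s ^ 2 - w ^ 2 by ring, upperSqrt_sq]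
    simp
  rw [eq_inv_of_mul_eq_one_left hprod]
  exact inv_anti₀ hw_pos (norm_le_norm_upperSqrt_add hw)

lemma norm_slitMap_sub_le (x : ℝ) {z : ℂ} (hz : 0 < z.im) :
    ‖slitMap x z - z‖ ≤ ‖z - x‖⁻¹ := by
  have h := norm_upperSqrt_sub_le (w := z - x) (by simpa using hz)
  rwa [show slitMap x z - z = upperSqrt ((z - x) ^ 2 - 1) - (z - x) by unfold slitMap; ring]

theorem slitMap_far_field :
    ∃ c > (0 : ℝ), ∀ (y : ℝ), 0 < y → ∀ (x : ℝ), 2 < |x| →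
      (‖slitMap x (Complex.I * y) - Complex.I * y‖) ^ 2
        ≤ c / (x ^ 2 + y ^ 2) := by
  refine ⟨1, one_pos, fun y hy x _ => ?_⟩
  have hdist : ‖Complex.I * y - x‖ ^ 2 = x ^ 2 + y ^ 2 := by
    rw [show Complex.I * y - x = ((-x : ℝ) : ℂ) + y * Complex.I by push_cast; ring,
      Complex.sq_norm, Complex.normSq_add_mul_I, neg_sq]
  calc ‖slitMap x (Complex.I * y) - Complex.I * y‖ ^ 2
      ≤ (‖Complex.I * y - x‖⁻¹) ^ 2 :=
        pow_le_pow_left₀ (norm_nonneg _) (norm_slitMap_sub_le x (by simpa using hy)) 2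
    _ = 1 / (x ^ 2 + y ^ 2) := by rw [inv_pow, hdist, one_div]
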